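/- The union of all ω-sorted subwords of ω is itself an ω-sorted subword of ω; in particular it is a reduced word. Consequently, replacing ω by this reduced subword ω′ does not change the collection of ω-sorted words: a subword is ω-sorted iff it is ω′-sorted. -/

import Mathlib

namespace SortingPaper

variable {B : Type*} {M : CoxeterMatrix B} {W : Type*} [Group W]

/-- The subword of `ω` with index set `A` (0-based indices). -/
def subword (ω : List B) (A : Finset ℕ) : List B :=
  (A.sort (· ≤ ·)).filterMap (fun i => ω[i]?)

/-- Lexicographic comparison of index sets: `A ≤lex C` iff `A = C` or the minimum
element of the symmetric difference belongs to `A`. -/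
def lexLE (A C : Finset ℕ) : Prop :=
  A = C ∨ ∃ k, k ∈ A ∧ k ∉ C ∧ ∀ j < k, (j ∈ A ↔ j ∈ C)

/-- `A` is the index set of an ω-sorted word: the corresponding subword is reduced, and
`A` is lexicographically least among index sets of reduced subwords of `ω` with the
same product in `W`. -/
def IsSorted (cs : CoxeterSystem M W) (ω : List B) (A : Finset ℕ) : Prop :=
  A ⊆ Finset.range ω.length ∧ cs.IsReduced (subword ω A) ∧
  ∀ C ⊆ Finset.range ω.length, cs.IsReduced (subword ω C) →
    cs.wordProd (subword ω C) = cs.wordProd (subword ω A) → lexLE A C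

/-- The ω-sorting algorithm (auxiliary): scan the word, recording positions that are
left descents of the current element. -/
noncomputable def sortAux (cs : CoxeterSystem M W) : List B → ℕ → W → Finset ℕ
  | [], _, _ => ∅
  | s :: rest, i, x =>
    if cs.length (cs.simple s * x) < cs.length x then
      insert i (sortAux cs rest (i + 1) (cs.simple s * x))
    else sortAux cs rest (i + 1) x

/-- The index set produced by the ω-sorting algorithm applied to `u ∈ W`. -/
noncomputable def sortIdx (cs : CoxeterSystem M W) (ω : List B) (u : W) : Finset ℕ :=
  sortAux cs ω 0 u

/-!
Scanning `ω` from the left and keeping a letter whenever it is a left descent of the part of `u`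
still to be produced (`sortIdx`) gives the lexicographically least reduced subword of `ω` with
product `u`, so the ω-sorted sets are exactly the outputs of this algorithm. Scanning instead
while keeping a letter whenever it lengthens the product built so far (`greedyReduced cs ω 1`)
gives a reduced subword `T` that contains every such output; the induction along `ω` rests on the
lifting property `ℓ (x s u) = ℓ x + ℓ u + 1` for `ℓ x < ℓ (x s)`, `ℓ u < ℓ (s u)` and
`ℓ (x u) = ℓ x + ℓ u`. Applied to the product of `T` itself, this shows that `T` equals the sorting
output for that product, the two sets having the same size; so `T` is sorted and is the union of
all sorted sets. Sorting relative to `ω|T` agrees with sorting relative to `ω` because the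
lexicographically least competitor always lies in `T`.

The lifting property comes from the strong exchange condition, proved with the Björner–Brenti
cocycle: the parity of the number of occurrences of a reflection `t` in the left inversion
sequence of a word depends only on the product `w` of the word (`invParity`), and it is odd
exactly when `ℓ (t w) < ℓ w`.
-/

open CoxeterSystem
open scoped List

theorem sort_image_of_strictMonoOn {α β : Type*} [LinearOrder α] [LinearOrder β] {f : α → β}
    {A : Finset α} (hf : StrictMonoOn f A) :
    (A.image f).sort (· ≤ ·) = (A.sort (· ≤ ·)).map f := by
  rw [← Finset.sort_val, Finset.image_val_of_injOn hf.injOn]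
  exact (Multiset.map_sort _ _ _ _ fun a ha b hb => (hf.le_iff_le ha hb).symm).symm

theorem getElem?_filterMap_of_forall_isSome {α β : Type*} {g : α → Option β} {xs : List α}
    (h : ∀ x ∈ xs, (g x).isSome) (i : ℕ) : (xs.filterMap g)[i]? = xs[i]?.bind g := by
  induction xs generalizing i with
  | nil => simp
  | cons x xs ih =>
    obtain ⟨b, hb⟩ := Option.isSome_iff_exists.1 (h x List.mem_cons_self)
    cases i with
    | zero => simp [hb]
    | succ i => simp [hb, ih (fun y hy => h y (List.mem_cons_of_mem x hy))]

theorem prod_map_alternatingWord_two_mul {G : Type*} [Monoid G] (f : B → G) (i i' : B)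
    (m : ℕ) : ((alternatingWord i i' (2 * m)).map f).prod = (f i * f i') ^ m := by
  induction m with
  | zero => simp [alternatingWord]
  | succ m ih =>
    have hodd : ¬Even (2 * m + 1) := Nat.not_even_two_mul_add_one m
    rw [show 2 * (m + 1) = 2 * m + 1 + 1 by ring, alternatingWord_succ', alternatingWord_succ',
      if_neg hodd, if_pos (even_two_mul m)]
    simp [ih, pow_succ', mul_assoc]

theorem zmod_two_eq_zero_or_one (x : ZMod 2) : x = 0 ∨ x = 1 := by
  decide +revert

def shift (A : Finset ℕ) : Finset ℕ := A.image (· + 1)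

@[simp] theorem zero_notMem_shift (A : Finset ℕ) : 0 ∉ shift A := by simp [shift]

@[simp] theorem succ_mem_shift {A : Finset ℕ} {n : ℕ} : n + 1 ∈ shift A ↔ n ∈ A := by
  simp [shift]

theorem strictMono_add_one : StrictMono (· + 1 : ℕ → ℕ) := fun _ _ h => Nat.add_lt_add_right h 1

theorem sort_shift (A : Finset ℕ) : (shift A).sort (· ≤ ·) = (A.sort (· ≤ ·)).map (· + 1) :=
  sort_image_of_strictMonoOn (strictMono_add_one.strictMonoOn _)

theorem exists_eq_shift_or_eq_insert_zero_shift (A : Finset ℕ) :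
    ∃ A', A = shift A' ∨ A = insert 0 (shift A') := by
  refine ⟨A.preimage (· + 1) (add_left_injective 1).injOn, ?_⟩
  by_cases h0 : 0 ∈ A
  · right; ext n; cases n <;> simp [h0]
  · left; ext n; cases n <;> simp [h0]

theorem shift_subset_range_succ_iff {A : Finset ℕ} {n : ℕ} :
    shift A ⊆ Finset.range (n + 1) ↔ A ⊆ Finset.range n := by
  simp [shift, Finset.subset_iff]

theorem insert_zero_shift_subset_range_succ_iff {A : Finset ℕ} {n : ℕ} :
    insert 0 (shift A) ⊆ Finset.range (n + 1) ↔ A ⊆ Finset.range n := by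
  simp [Finset.insert_subset_iff, shift_subset_range_succ_iff]

def nthSmallest (V : Finset ℕ) (i : ℕ) : ℕ := (V.sort (· ≤ ·)).getD i 0

theorem getElem?_sort_eq_some_nthSmallest {V : Finset ℕ} {i : ℕ} (hi : i < V.card) :
    (V.sort (· ≤ ·))[i]? = some (nthSmallest V i) := by
  rw [nthSmallest, List.getD_eq_getElem _ _ (by simpa using hi), List.getElem?_eq_getElem]

theorem strictMonoOn_nthSmallest (V : Finset ℕ) :
    StrictMonoOn (nthSmallest V) (Finset.range V.card) := by
  intro a ha b hb hab
  simp only [Finset.coe_range, Set.mem_Iio] at ha hb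
  rw [nthSmallest, nthSmallest, List.getD_eq_getElem (V.sort (· ≤ ·)) 0 (by simpa using ha),
    List.getD_eq_getElem (V.sort (· ≤ ·)) 0 (by simpa using hb)]
  exact (Finset.sortedLT_sort V).getElem_lt_getElem_iff.2 hab

theorem image_nthSmallest_range (V : Finset ℕ) :
    (Finset.range V.card).image (nthSmallest V) = V := by
  ext v
  simp only [Finset.mem_image, Finset.mem_range]
  constructor
  · rintro ⟨i, hi, rfl⟩
    rw [← Finset.mem_sort (· ≤ ·)]
    exact List.mem_of_getElem? (getElem?_sort_eq_some_nthSmallest hi)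
  · intro hv
    obtain ⟨i, hi, hiv⟩ := List.getElem_of_mem ((Finset.mem_sort (· ≤ ·)).2 hv)
    rw [Finset.length_sort] at hi
    refine ⟨i, hi, Option.some_injective _ ?_⟩
    rw [← getElem?_sort_eq_some_nthSmallest hi, List.getElem?_eq_getElem (by simpa using hi), hiv]

theorem image_nthSmallest_subset {V X : Finset ℕ} (hX : X ⊆ Finset.range V.card) :
    X.image (nthSmallest V) ⊆ V :=
  (Finset.image_subset_image hX).trans (image_nthSmallest_range V).le

@[simp] theorem subword_nil (A : Finset ℕ) : subword ([] : List B) A = [] := by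
  simp [subword]

@[simp] theorem subword_cons_shift (c : B) (ω : List B) (A : Finset ℕ) :
    subword (c :: ω) (shift A) = subword ω A := by
  simp [subword, sort_shift, List.filterMap_map]

@[simp] theorem subword_cons_insert_zero_shift (c : B) (ω : List B) (A : Finset ℕ) :
    subword (c :: ω) (insert 0 (shift A)) = c :: subword ω A := by
  rw [subword, Finset.sort_insert _ (fun _ _ => Nat.zero_le _) (zero_notMem_shift A)]
  simp [subword, sort_shift, List.filterMap_map]

theorem subword_sublist (ω : List B) (A : Finset ℕ) : subword ω A <+ ω := by
  induction ω generalizing A with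
  | nil => simp
  | cons c ω ih =>
    obtain ⟨A', rfl | rfl⟩ := exists_eq_shift_or_eq_insert_zero_shift A
    · simpa using (ih A').cons c
    · simpa using (ih A').cons_cons c

theorem length_subword {ω : List B} {A : Finset ℕ} (hA : A ⊆ Finset.range ω.length) :
    (subword ω A).length = A.card := by
  rw [subword, List.filterMap_length_eq_length.2, Finset.length_sort]
  intro a ha
  simpa using hA ((Finset.mem_sort _).1 ha)

theorem subword_subword {ω : List B} {V A : Finset ℕ} (hV : V ⊆ Finset.range ω.length)
    (hA : A ⊆ Finset.range V.card) :
    subword (subword ω V) A = subword ω (A.image (nthSmallest V)) := by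
  unfold subword
  rw [sort_image_of_strictMonoOn ((strictMonoOn_nthSmallest V).mono (Finset.coe_subset.2 hA)),
    List.filterMap_map]
  refine List.filterMap_congr fun i hi => ?_
  have hi : i < V.card := by simpa using hA ((Finset.mem_sort _).1 hi)
  rw [Function.comp_apply, getElem?_filterMap_of_forall_isSome,
    getElem?_sort_eq_some_nthSmallest hi, Option.bind_some]
  intro j hj
  simpa using hV ((Finset.mem_sort _).1 hj)

theorem lexLE_trans {A C D : Finset ℕ} (h₁ : lexLE A C) (h₂ : lexLE C D) : lexLE A D := by
  rcases h₁ with rfl | ⟨k₁, hk₁A, hk₁C, hbelow₁⟩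
  · exact h₂
  rcases h₂ with rfl | ⟨k₂, hk₂C, hk₂D, hbelow₂⟩
  · exact Or.inr ⟨k₁, hk₁A, hk₁C, hbelow₁⟩
  right
  rcases lt_trichotomy k₁ k₂ with h | rfl | h
  · exact ⟨k₁, hk₁A, fun hk₁D => hk₁C ((hbelow₂ k₁ h).2 hk₁D),
      fun j hj => (hbelow₁ j hj).trans (hbelow₂ j (hj.trans h))⟩
  · exact ⟨k₁, hk₁A, hk₂D, fun j hj => (hbelow₁ j hj).trans (hbelow₂ j hj)⟩
  · exact ⟨k₂, (hbelow₁ k₂ h).2 hk₂C, hk₂D,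
      fun j hj => (hbelow₁ j (hj.trans h)).trans (hbelow₂ j hj)⟩

theorem lexLE_antisymm {A C : Finset ℕ} (h₁ : lexLE A C) (h₂ : lexLE C A) : A = C := by
  rcases h₁ with h | ⟨k₁, hk₁A, hk₁C, hbelow₁⟩
  · exact h
  rcases h₂ with h | ⟨k₂, hk₂C, hk₂A, hbelow₂⟩
  · exact h.symm
  rcases lt_trichotomy k₁ k₂ with h | rfl | h
  · exact absurd ((hbelow₂ k₁ h).2 hk₁A) hk₁C
  · exact absurd hk₁A hk₂A
  · exact absurd ((hbelow₁ k₂ h).2 hk₂C) hk₂A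

theorem lexLE_of_zero_mem {A C : Finset ℕ} (hA : 0 ∈ A) (hC : 0 ∉ C) : lexLE A C :=
  Or.inr ⟨0, hA, hC, fun _ h => absurd h (Nat.not_lt_zero _)⟩

theorem lexLE_insert {A C : Finset ℕ} {k : ℕ} (hk : k ∉ A) (h : lexLE A C) :
    lexLE (insert k A) (insert k C) := by
  rcases h with rfl | ⟨k', hk'A, hk'C, hbelow⟩
  · exact Or.inl rfl
  have hne : k' ≠ k := by rintro rfl; exact hk hk'A
  refine Or.inr ⟨k', Finset.mem_insert_of_mem hk'A, by simp [hne, hk'C], fun j hj => ?_⟩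
  simp only [Finset.mem_insert, hbelow j hj]

theorem lexLE_image_iff {f : ℕ → ℕ} {S : Set ℕ} (hf : StrictMonoOn f S) {A C : Finset ℕ}
    (hA : ↑A ⊆ S) (hC : ↑C ⊆ S) : lexLE (A.image f) (C.image f) ↔ lexLE A C := by
  have hmem : ∀ {X : Finset ℕ}, ↑X ⊆ S → ∀ {a}, a ∈ S → (f a ∈ X.image f ↔ a ∈ X) := by
    intro X hX a ha
    rw [← Finset.mem_coe, Finset.coe_image, hf.injOn.mem_image_iff hX ha, Finset.mem_coe]
  constructor
  · rintro (h | ⟨k, hkA, hkC, hbelow⟩)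
    · left
      rw [← Finset.coe_inj, Finset.coe_image, Finset.coe_image,
        hf.injOn.image_eq_image_iff hA hC, Finset.coe_inj] at h
      exact h
    obtain ⟨a, haA, rfl⟩ := Finset.mem_image.mp hkA
    refine Or.inr ⟨a, haA, fun haC => hkC (Finset.mem_image_of_mem f haC), fun j hj => ?_⟩
    constructor
    · intro hjA
      have hjS := hA hjA
      exact (hmem hC hjS).1 ((hbelow _ (hf hjS (hA haA) hj)).1 (Finset.mem_image_of_mem f hjA))
    · intro hjC
      have hjS := hC hjC
      exact (hmem hA hjS).1 ((hbelow _ (hf hjS (hA haA) hj)).2 (Finset.mem_image_of_mem f hjC))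
  · rintro (rfl | ⟨k, hkA, hkC, hbelow⟩)
    · exact Or.inl rfl
    have hkS := hA hkA
    have transfer : ∀ {X Y : Finset ℕ}, ↑X ⊆ S → (∀ j < k, j ∈ X → j ∈ Y) →
        ∀ y < f k, y ∈ X.image f → y ∈ Y.image f := by
      intro X Y hX hXY y hy hyX
      obtain ⟨a, haX, rfl⟩ := Finset.mem_image.mp hyX
      refine Finset.mem_image_of_mem f (hXY a ?_ haX)
      exact (hf.lt_iff_lt (hX haX) hkS).1 hy
    refine Or.inr ⟨f k, Finset.mem_image_of_mem f hkA, fun h => hkC ((hmem hC hkS).1 h),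
      fun y hy => ⟨transfer hA (fun j hj => (hbelow j hj).1) y hy,
        transfer hC (fun j hj => (hbelow j hj).2) y hy⟩⟩

theorem lexLE_shift_iff {A C : Finset ℕ} : lexLE (shift A) (shift C) ↔ lexLE A C :=
  lexLE_image_iff (strictMono_add_one.strictMonoOn _) (Set.subset_univ _) (Set.subset_univ _)

section Coxeter

variable (cs : CoxeterSystem M W)

local prefix:100 "s " => cs.simple
local prefix:100 "π " => cs.wordProd
local prefix:100 "ℓ " => cs.length
local prefix:100 "lis " => cs.leftInvSeq

section InversionParity

open scoped Classical

noncomputable def invParityStep (i : B) : Function.End (W × ZMod 2) :=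
  fun p => (s i * p.1 * s i, p.2 + if p.1 = s i then 1 else 0)

theorem prod_map_invParityStep_apply (ω : List B) (p : W × ZMod 2) :
    (ω.map (invParityStep cs)).prod p =
      (π ω * p.1 * (π ω)⁻¹, p.2 + (lis ω).count (π ω * p.1 * (π ω)⁻¹)) := by
  induction ω with
  | nil => simp; rfl
  | cons i ω ih =>
    set t := π ω * p.1 * (π ω)⁻¹
    have hconj : π (i :: ω) * p.1 * (π (i :: ω))⁻¹ = MulAut.conj (s i) t := by
      simp [t, wordProd_cons, mul_assoc]
    have hcount : (lis (i :: ω)).count (MulAut.conj (s i) t) =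
        (lis ω).count t + if t = s i then 1 else 0 := by
      rw [leftInvSeq, List.count_cons, List.count_map_of_injective _ _ (MulAut.conj _).injective]
      simp [MulAut.conj_apply, mul_eq_one_iff_inv_eq, eq_comm (a := t)]
    rw [hconj, hcount]
    change invParityStep cs i ((ω.map (invParityStep cs)).prod p) = _
    rw [ih]
    simp [invParityStep, MulAut.conj_apply, add_assoc]

theorem even_count_leftInvSeq_alternatingWord (i i' : B) (t : W) :
    Even ((lis (alternatingWord i i' (2 * M i i'))).count t) := by
  set L := lis (alternatingWord i i' (2 * M i i'))
  have hlen : L.length = 2 * M i i' := by simp [L]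
  have hperiodic : L.drop (M i i') = L.take (M i i') := by
    refine List.ext_getElem (by simp [hlen]; omega) fun k hk _ => ?_
    have hk' : k < M i i' := by simp [hlen] at hk; omega
    rw [List.getElem_drop, List.getElem_take]
    simp only [L, getElem_leftInvSeq_alternatingWord cs i i' (M i i') (M i i' + k) (by omega),
      getElem_leftInvSeq_alternatingWord cs i i' (M i i') k (by omega),
      prod_alternatingWord_eq_mul_pow, Nat.not_even_two_mul_add_one, if_false]
    rw [show (2 * (M i i' + k) + 1) / 2 = M i i' + k by omega,
      show (2 * k + 1) / 2 = k by omega, pow_add, simple_mul_simple_pow', one_mul]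
  rw [← List.take_append_drop (M i i') L, List.count_append, hperiodic]
  exact ⟨_, rfl⟩

theorem isLiftable_invParityStep : M.IsLiftable (invParityStep cs) := by
  intro i i'
  funext p
  rw [← prod_map_alternatingWord_two_mul, prod_map_invParityStep_apply]
  obtain ⟨c, hc⟩ := even_count_leftInvSeq_alternatingWord cs i i'
    (π alternatingWord i i' (2 * M i i') * p.1 * (π alternatingWord i i' (2 * M i i'))⁻¹)
  rw [hc]
  simp [prod_alternatingWord_eq_mul_pow, CharTwo.add_self_eq_zero]
  rfl

noncomputable def invParityHom : W →* Function.End (W × ZMod 2) :=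
  cs.lift ⟨invParityStep cs, isLiftable_invParityStep cs⟩

noncomputable def invParity (w t : W) : ZMod 2 :=
  (invParityHom cs w (w⁻¹ * t * w, 0)).2

theorem invParityHom_wordProd (ω : List B) :
    invParityHom cs (π ω) = (ω.map (invParityStep cs)).prod := by
  simp [invParityHom, wordProd, map_list_prod, Function.comp_def, lift_apply_simple]

theorem invParity_wordProd (ω : List B) (t : W) :
    invParity cs (π ω) t = (lis ω).count t := by
  simp [invParity, invParityHom_wordProd, prod_map_invParityStep_apply, mul_assoc]

theorem invParityHom_apply (w : W) (p : W × ZMod 2) :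
    invParityHom cs w p = (w * p.1 * w⁻¹, p.2 + invParity cs w (w * p.1 * w⁻¹)) := by
  obtain ⟨ω, rfl⟩ := cs.wordProd_surjective w
  rw [invParityHom_wordProd, prod_map_invParityStep_apply, invParity_wordProd]

theorem invParity_mul (u v t : W) :
    invParity cs (u * v) t = invParity cs u t + invParity cs v (u⁻¹ * t * u) := by
  have h := congrArg Prod.snd
    (congrFun (map_mul (invParityHom cs) u v) ((u * v)⁻¹ * t * (u * v), 0))
  change invParity cs (u * v) t = (invParityHom cs u (invParityHom cs v _)).2 at h
  rw [h, invParityHom_apply, invParityHom_apply]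
  simp only [mul_inv_rev, zero_add]
  rw [add_comm]
  congr 2 <;> group

theorem invParity_one (t : W) : invParity cs 1 t = 0 := by
  simpa using invParity_wordProd cs [] t

theorem invParity_simple_self (i : B) : invParity cs (s i) (s i) = 1 := by
  simpa using invParity_wordProd cs [i] (s i)

theorem invParity_inv (w t : W) : invParity cs w⁻¹ (w⁻¹ * t * w) = invParity cs w t := by
  have h := invParity_mul cs w w⁻¹ t
  rw [mul_inv_cancel, invParity_one] at h
  grind

theorem invParity_self {t : W} (ht : cs.IsReflection t) : invParity cs t t = 1 := by
  obtain ⟨w, i, rfl⟩ := ht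
  have h₁ : w⁻¹ * (w * s i * w⁻¹) * w = s i := by group
  have h₂ : (w * s i)⁻¹ * (w * s i * w⁻¹) * (w * s i) = s i := by group
  have hinv := invParity_inv cs w (w * s i * w⁻¹)
  rw [h₁] at hinv
  rw [invParity_mul cs (w * s i) w⁻¹, invParity_mul cs w (s i), h₁, h₂, hinv,
    invParity_simple_self]
  grind

theorem mem_leftInvSeq_of_invParity_eq_one {ω : List B} {t : W}
    (h : invParity cs (π ω) t = 1) : t ∈ lis ω := by
  by_contra hmem
  simp [invParity_wordProd, List.count_eq_zero_of_not_mem hmem] at h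

theorem invParity_eq_one_iff {w t : W} (ht : cs.IsReflection t) :
    invParity cs w t = 1 ↔ ℓ (t * w) < ℓ w := by
  have hdesc : ∀ w, invParity cs w t = 1 → ℓ (t * w) < ℓ w := by
    intro w hw
    obtain ⟨ω, hω, rfl⟩ := cs.exists_isReduced w
    exact (cs.isLeftInversion_of_mem_leftInvSeq hω (mem_leftInvSeq_of_invParity_eq_one cs hw)).2
  refine ⟨hdesc w, fun hlt => ?_⟩
  by_contra hne
  have hzero : invParity cs w t = 0 := (zmod_two_eq_zero_or_one _).resolve_right hne
  have hone : invParity cs (t * w) t = 1 := by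
    rw [invParity_mul, invParity_self cs ht, show t⁻¹ * t * t = t by group, hzero, add_zero]
  have := hdesc _ hone
  rw [← mul_assoc, ht.mul_self, one_mul] at this
  omega

theorem exists_wordProd_eraseIdx_eq {ω : List B} {t : W} (ht : cs.IsReflection t)
    (h : ℓ (t * π ω) < ℓ (π ω)) : ∃ j < ω.length, π (ω.eraseIdx j) = t * π ω := by
  have hmem := mem_leftInvSeq_of_invParity_eq_one cs ((invParity_eq_one_iff cs ht).2 h)
  obtain ⟨j, hj, hjt⟩ := List.mem_iff_getElem.mp hmem
  rw [length_leftInvSeq] at hj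
  refine ⟨j, hj, ?_⟩
  rw [← getD_leftInvSeq_mul_wordProd, List.getD_eq_getElem _ _ (by simpa using hj), hjt]

end InversionParity

theorem length_mul_simple_mul {x u : W} {i : B} (hx : ℓ x < ℓ (x * s i))
    (hu : ℓ u < ℓ (s i * u)) (hxu : ℓ (x * u) = ℓ x + ℓ u) :
    ℓ (x * s i * u) = ℓ x + ℓ u + 1 := by
  -- `t = x s x⁻¹` is a left inversion neither of `x` nor, after conjugating by `x`, of `u`;
  -- by the cocycle identity it is then no left inversion of `x u`.
  have ht : cs.IsReflection (x * s i * x⁻¹) := ⟨x, i, rfl⟩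
  have hx' : invParity cs x (x * s i * x⁻¹) = 0 := (zmod_two_eq_zero_or_one _).resolve_right <| by
    rw [invParity_eq_one_iff cs ht, inv_mul_cancel_right]; omega
  have hu' : invParity cs u (s i) = 0 := (zmod_two_eq_zero_or_one _).resolve_right <| by
    rw [invParity_eq_one_iff cs (cs.isReflection_simple i)]; omega
  have hxu' : ¬ℓ (x * s i * x⁻¹ * (x * u)) < ℓ (x * u) := by
    rw [← invParity_eq_one_iff cs ht, invParity_mul,
      show x⁻¹ * (x * s i * x⁻¹) * x = s i by group, hx', hu']
    decide
  have hne := ht.length_mul_right_ne (x * u)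
  rw [show x * s i * x⁻¹ * (x * u) = x * s i * u by group] at hxu' hne
  have := cs.length_mul_le (x * s i) u
  have := cs.length_mul_le x (s i)
  rw [length_simple] at *
  omega

theorem isReduced_cons_iff {i : B} {ω : List B} :
    cs.IsReduced (i :: ω) ↔ cs.IsReduced ω ∧ cs.IsLeftDescent (π (i :: ω)) i := by
  simp only [CoxeterSystem.IsReduced, IsLeftDescent, wordProd_cons,
    simple_mul_simple_cancel_left, List.length_cons]
  have := cs.length_wordProd_le ω
  rcases cs.length_simple_mul (π ω) i with h | h <;> omega

theorem exists_sublist_of_isLeftDescent {ω : List B} (hω : cs.IsReduced ω) {i : B}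
    (h : cs.IsLeftDescent (π ω) i) : ∃ l, l <+ ω ∧ cs.IsReduced l ∧ π l = s i * π ω := by
  obtain ⟨j, hj, hprod⟩ := exists_wordProd_eraseIdx_eq cs (cs.isReflection_simple i) h
  refine ⟨ω.eraseIdx j, List.eraseIdx_sublist ω j, ?_, hprod⟩
  have := List.length_eraseIdx_add_one hj
  rw [isLeftDescent_iff] at h
  rw [CoxeterSystem.IsReduced] at hω ⊢
  rw [hprod]
  omega

def HasReducedSublist (ω : List B) (u : W) : Prop :=
  ∃ l, l <+ ω ∧ cs.IsReduced l ∧ π l = u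

variable {cs} in
theorem HasReducedSublist.of_cons_of_isLeftDescent {c : B} {ω : List B} {u : W}
    (h : HasReducedSublist cs (c :: ω) u) (hc : cs.IsLeftDescent u c) :
    HasReducedSublist cs ω (s c * u) := by
  obtain ⟨l, hl, hred, rfl⟩ := h
  cases hl with
  | cons _ hl =>
    obtain ⟨l', hl', hred', hprod⟩ := exists_sublist_of_isLeftDescent cs hred hc
    exact ⟨l', hl'.trans hl, hred', hprod⟩
  | cons_cons _ hl =>
    exact ⟨_, hl, ((isReduced_cons_iff cs).1 hred).1, by
      rw [wordProd_cons, simple_mul_simple_cancel_left]⟩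

variable {cs} in
theorem HasReducedSublist.of_cons_of_not_isLeftDescent {c : B} {ω : List B} {u : W}
    (h : HasReducedSublist cs (c :: ω) u) (hc : ¬cs.IsLeftDescent u c) :
    HasReducedSublist cs ω u := by
  obtain ⟨l, hl, hred, rfl⟩ := h
  cases hl with
  | cons _ hl => exact ⟨l, hl, hred, rfl⟩
  | cons_cons _ hl => exact absurd ((isReduced_cons_iff cs).1 hred).2 hc

theorem sortAux_succ (ω : List B) (i : ℕ) (x : W) :
    sortAux cs ω (i + 1) x = shift (sortAux cs ω i x) := by
  induction ω generalizing i x with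
  | nil => rfl
  | cons c ω ih =>
    simp only [sortAux]
    split_ifs <;> simp [ih, shift, Finset.image_insert]

theorem sortIdx_cons_of_isLeftDescent {c : B} {ω : List B} {u : W} (hc : cs.IsLeftDescent u c) :
    sortIdx cs (c :: ω) u = insert 0 (shift (sortIdx cs ω (s c * u))) := by
  rw [sortIdx, sortAux, if_pos (show ℓ (s c * u) < ℓ u from hc), sortAux_succ, sortIdx]

theorem sortIdx_cons_of_not_isLeftDescent {c : B} {ω : List B} {u : W}
    (hc : ¬cs.IsLeftDescent u c) : sortIdx cs (c :: ω) u = shift (sortIdx cs ω u) := by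
  rw [sortIdx, sortAux, if_neg (show ¬ℓ (s c * u) < ℓ u from hc), sortAux_succ, sortIdx]

theorem sortIdx_spec {ω : List B} {u : W} (h : HasReducedSublist cs ω u) :
    sortIdx cs ω u ⊆ Finset.range ω.length ∧ cs.IsReduced (subword ω (sortIdx cs ω u)) ∧
      π (subword ω (sortIdx cs ω u)) = u := by
  induction ω generalizing u with
  | nil =>
    obtain ⟨l, hl, -, rfl⟩ := h
    rw [List.sublist_nil.1 hl]
    exact ⟨Finset.empty_subset _, by simp [CoxeterSystem.IsReduced], by simp⟩
  | cons c ω ih =>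
    by_cases hc : cs.IsLeftDescent u c
    · obtain ⟨hsub, hred, hprod⟩ := ih (h.of_cons_of_isLeftDescent hc)
      have hprod' : π (c :: subword ω (sortIdx cs ω (s c * u))) = u := by
        rw [wordProd_cons, hprod, simple_mul_simple_cancel_left]
      rw [sortIdx_cons_of_isLeftDescent cs hc, subword_cons_insert_zero_shift,
        List.length_cons, insert_zero_shift_subset_range_succ_iff, isReduced_cons_iff, hprod']
      exact ⟨hsub, ⟨hred, hc⟩, rfl⟩
    · obtain ⟨hsub, hred, hprod⟩ := ih (h.of_cons_of_not_isLeftDescent hc)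
      rw [sortIdx_cons_of_not_isLeftDescent cs hc, subword_cons_shift, List.length_cons,
        shift_subset_range_succ_iff]
      exact ⟨hsub, hred, hprod⟩

theorem lexLE_sortIdx {ω : List B} {C : Finset ℕ} (hC : C ⊆ Finset.range ω.length)
    (hred : cs.IsReduced (subword ω C)) : lexLE (sortIdx cs ω (π (subword ω C))) C := by
  induction ω generalizing C with
  | nil =>
    obtain rfl : C = ∅ := by simpa using hC
    exact Or.inl rfl
  | cons c ω ih =>
    obtain ⟨C, rfl | rfl⟩ := exists_eq_shift_or_eq_insert_zero_shift C
    · rw [List.length_cons, shift_subset_range_succ_iff] at hC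
      rw [subword_cons_shift] at hred ⊢
      by_cases hc : cs.IsLeftDescent (π (subword ω C)) c
      · rw [sortIdx_cons_of_isLeftDescent cs hc]
        exact lexLE_of_zero_mem (Finset.mem_insert_self 0 _) (zero_notMem_shift C)
      · rw [sortIdx_cons_of_not_isLeftDescent cs hc]
        exact lexLE_shift_iff.2 (ih hC hred)
    · rw [List.length_cons, insert_zero_shift_subset_range_succ_iff] at hC
      rw [subword_cons_insert_zero_shift] at hred ⊢
      obtain ⟨hred, hc⟩ := (isReduced_cons_iff cs).1 hred
      rw [sortIdx_cons_of_isLeftDescent cs hc, wordProd_cons, simple_mul_simple_cancel_left]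
      exact lexLE_insert (zero_notMem_shift _) (lexLE_shift_iff.2 (ih hC hred))

variable {cs} in
theorem isSorted_sortIdx {ω : List B} {u : W} (h : HasReducedSublist cs ω u) :
    IsSorted cs ω (sortIdx cs ω u) := by
  obtain ⟨hsub, hred, hprod⟩ := sortIdx_spec cs h
  refine ⟨hsub, hred, fun C hC hCred hCprod => ?_⟩
  rw [hprod] at hCprod
  simpa [hCprod] using lexLE_sortIdx cs hC hCred

variable {cs} in
theorem IsSorted.hasReducedSublist {ω : List B} {A : Finset ℕ} (hA : IsSorted cs ω A) :
    HasReducedSublist cs ω (π (subword ω A)) :=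
  ⟨_, subword_sublist ω A, hA.2.1, rfl⟩

variable {cs} in
theorem IsSorted.eq_sortIdx {ω : List B} {A : Finset ℕ} (hA : IsSorted cs ω A) :
    A = sortIdx cs ω (π (subword ω A)) := by
  obtain ⟨hsub, hred, hprod⟩ := sortIdx_spec cs hA.hasReducedSublist
  exact lexLE_antisymm (hA.2.2 _ hsub hred hprod) (lexLE_sortIdx cs hA.1 hA.2.1)

noncomputable def greedyReduced : List B → W → Finset ℕ
  | [], _ => ∅
  | c :: ω, x =>
    if ℓ (x * s c) < ℓ x then shift (greedyReduced ω x)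
    else insert 0 (shift (greedyReduced ω (x * s c)))

theorem greedyReduced_cons_of_isRightDescent {c : B} {ω : List B} {x : W}
    (hc : cs.IsRightDescent x c) : greedyReduced cs (c :: ω) x = shift (greedyReduced cs ω x) :=
  if_pos hc

theorem greedyReduced_cons_of_not_isRightDescent {c : B} {ω : List B} {x : W}
    (hc : ¬cs.IsRightDescent x c) :
    greedyReduced cs (c :: ω) x = insert 0 (shift (greedyReduced cs ω (x * s c))) :=
  if_neg hc

theorem greedyReduced_spec (ω : List B) (x : W) :
    greedyReduced cs ω x ⊆ Finset.range ω.length ∧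
      ℓ (x * π (subword ω (greedyReduced cs ω x))) =
        ℓ x + (subword ω (greedyReduced cs ω x)).length := by
  induction ω generalizing x with
  | nil => simp [greedyReduced]
  | cons c ω ih =>
    by_cases hc : cs.IsRightDescent x c
    · rw [greedyReduced_cons_of_isRightDescent cs hc, subword_cons_shift, List.length_cons,
        shift_subset_range_succ_iff]
      exact ih x
    · obtain ⟨hsub, hlen⟩ := ih (x * s c)
      rw [greedyReduced_cons_of_not_isRightDescent cs hc, subword_cons_insert_zero_shift,
        List.length_cons, insert_zero_shift_subset_range_succ_iff, wordProd_cons, ← mul_assoc,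
        hlen, (not_isRightDescent_iff cs).1 hc, List.length_cons]
      exact ⟨hsub, by ring⟩

theorem sortIdx_subset_greedyReduced {ω : List B} {x u : W} (hxu : ℓ (x * u) = ℓ x + ℓ u)
    (hu : HasReducedSublist cs ω u) : sortIdx cs ω u ⊆ greedyReduced cs ω x := by
  induction ω generalizing x u with
  | nil => simp [sortIdx, sortAux]
  | cons c ω ih =>
    by_cases hx : cs.IsRightDescent x c
    · have hu' : ¬cs.IsLeftDescent u c := by
        rw [isRightDescent_iff] at hx
        rw [not_isLeftDescent_iff]
        have := cs.length_mul_le (x * s c) (s c * u)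
        rw [mul_assoc, simple_mul_simple_cancel_left] at this
        rcases cs.length_simple_mul u c with h | h <;> omega
      rw [sortIdx_cons_of_not_isLeftDescent cs hu', greedyReduced_cons_of_isRightDescent cs hx]
      exact Finset.image_subset_image (ih hxu (hu.of_cons_of_not_isLeftDescent hu'))
    rw [greedyReduced_cons_of_not_isRightDescent cs hx]
    rw [not_isRightDescent_iff] at hx
    by_cases hu' : cs.IsLeftDescent u c
    · rw [sortIdx_cons_of_isLeftDescent cs hu']
      refine Finset.insert_subset_insert _ (Finset.image_subset_image (ih ?_
        (hu.of_cons_of_isLeftDescent hu')))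
      rw [isLeftDescent_iff] at hu'
      rw [mul_assoc, simple_mul_simple_cancel_left]
      omega
    · rw [sortIdx_cons_of_not_isLeftDescent cs hu']
      refine (Finset.image_subset_image (ih ?_ (hu.of_cons_of_not_isLeftDescent hu'))).trans
        (Finset.subset_insert _ _)
      rw [not_isLeftDescent_iff] at hu'
      rw [hx, length_mul_simple_mul cs (by omega) (by omega) hxu]
      ring

theorem isSorted_greedyReduced_one (ω : List B) : IsSorted cs ω (greedyReduced cs ω 1) := by
  obtain ⟨hT, hTred⟩ := greedyReduced_spec cs ω 1
  set T := greedyReduced cs ω 1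
  rw [one_mul, length_one, zero_add] at hTred
  have hu : HasReducedSublist cs ω (π (subword ω T)) :=
    ⟨_, subword_sublist ω T, hTred, rfl⟩
  obtain ⟨hS, hSred, hSprod⟩ := sortIdx_spec cs hu
  have hcard : T.card ≤ (sortIdx cs ω (π (subword ω T))).card := by
    rw [← length_subword hT, ← length_subword hS, ← hTred, ← hSred, hSprod]
  have heq : sortIdx cs ω (π (subword ω T)) = T :=
    Finset.eq_of_subset_of_card_le (sortIdx_subset_greedyReduced cs (by simp) hu) hcard
  rw [← heq]
  exact isSorted_sortIdx hu

variable {cs} in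
theorem IsSorted.subset_greedyReduced_one {ω : List B} {A : Finset ℕ} (hA : IsSorted cs ω A) :
    A ⊆ greedyReduced cs ω 1 := by
  rw [hA.eq_sortIdx]
  exact sortIdx_subset_greedyReduced cs (by simp) hA.hasReducedSublist

variable {cs} in
theorem IsSorted.of_image_nthSmallest {ω : List B} {V A : Finset ℕ}
    (hV : V ⊆ Finset.range ω.length) (hA : A ⊆ Finset.range V.card)
    (h : IsSorted cs ω (A.image (nthSmallest V))) : IsSorted cs (subword ω V) A := by
  rw [IsSorted, length_subword hV, subword_subword hV hA]
  refine ⟨hA, h.2.1, fun C hC hCred hCprod => ?_⟩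
  rw [subword_subword hV hC] at hCred hCprod
  exact (lexLE_image_iff (strictMonoOn_nthSmallest V) (Finset.coe_subset.2 hA)
    (Finset.coe_subset.2 hC)).1 (h.2.2 _ ((image_nthSmallest_subset hC).trans hV) hCred hCprod)

variable {cs} in
theorem IsSorted.image_nthSmallest {ω : List B} {V A : Finset ℕ} (hV : V ⊆ Finset.range ω.length)
    (hmax : ∀ A, IsSorted cs ω A → A ⊆ V) (hA : A ⊆ Finset.range V.card)
    (h : IsSorted cs (subword ω V) A) : IsSorted cs ω (A.image (nthSmallest V)) := by
  rw [IsSorted, length_subword hV, subword_subword hV hA] at h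
  obtain ⟨-, hred, hmin⟩ := h
  refine ⟨(image_nthSmallest_subset hA).trans hV, hred, fun C hC hCred hCprod => ?_⟩
  have hu : HasReducedSublist cs ω (π (subword ω (A.image (nthSmallest V)))) :=
    ⟨_, subword_sublist _ _, hred, rfl⟩
  obtain ⟨X, hX, hXG⟩ := Finset.subset_image_iff.1
    ((hmax _ (isSorted_sortIdx hu)).trans (image_nthSmallest_range V).ge)
  obtain ⟨-, hGred, hGprod⟩ := sortIdx_spec cs hu
  rw [← hXG, ← subword_subword hV hX] at hGred hGprod
  have hAG := (lexLE_image_iff (strictMonoOn_nthSmallest V) (Finset.coe_subset.2 hA)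
    (Finset.coe_subset.2 hX)).2 (hmin X hX hGred hGprod)
  rw [hXG] at hAG
  exact lexLE_trans hAG (hCprod ▸ lexLE_sortIdx cs hC hCred)

end Coxeter

/-- the union `U` of all ω-sorted subwords of `ω` is itself ω-sorted
(in particular reduced), every ω-sorted set is contained in `U`, and sorting with
respect to the reduced word `ω' = subword ω U` agrees with sorting with respect to
`ω` (under the order-preserving identification of positions of `ω'` with `U`). -/
theorem union_of_sorted_is_sorted (cs : CoxeterSystem M W) (ω : List B) (U : Finset ℕ)
    (hU : ∀ i, i ∈ U ↔ ∃ A : Finset ℕ, IsSorted cs ω A ∧ i ∈ A) :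
    IsSorted cs ω U ∧
    (∀ A : Finset ℕ, IsSorted cs ω A → A ⊆ U) ∧
    (∀ A : Finset ℕ, A ⊆ Finset.range U.card →
      (IsSorted cs (subword ω U) A ↔
        IsSorted cs ω (A.image fun i => (U.sort (· ≤ ·)).getD i 0))) := by
  have hT := isSorted_greedyReduced_one cs ω
  have hmax : ∀ A, IsSorted cs ω A → A ⊆ greedyReduced cs ω 1 :=
    fun A hA => hA.subset_greedyReduced_one
  obtain rfl : U = greedyReduced cs ω 1 := by
    ext i
    rw [hU]
    exact ⟨fun ⟨A, hA, hi⟩ => hmax A hA hi, fun hi => ⟨_, hT, hi⟩⟩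
  exact ⟨hT, hmax, fun A hA =>
    ⟨(·.image_nthSmallest hT.1 hmax hA), (·.of_image_nthSmallest hT.1 hA)⟩⟩

end SortingPaper
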